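/- arXiv:2404.10284 — 6 statements merged into one kernel-verified Lean document; each statement's English description precedes it below -/
import Mathlib

section
/- If A₁, …, Aₙ are positive semidefinite real symmetric n × n matrices, then their mixed discriminant is nonnegative: D(A₁, …, Aₙ) ≥ 0. If all the Aᵢ are positive definite, then D(A₁, …, Aₙ) > 0. -/
/-- The mixed discriminant of `n` real `n × n` matrices. -/
noncomputable def mixedDisc (n : ℕ) (A : Fin n → Matrix (Fin n) (Fin n) ℝ) : ℝ :=
  ((n.factorial : ℝ))⁻¹ *
    ∑ σ : Equiv.Perm (Fin n), (Matrix.of fun i j => A (σ j) i j).det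

/-!
The `σ`-term of `D` is a determinant whose `j`-th column is taken from `A_{σ j}`, so `D` is
multilinear. A positive semidefinite matrix is a sum of rank-one matrices `v vᵀ`, and
`D(v₁v₁ᵀ, …, vₙvₙᵀ) = det(v₁, …, vₙ)² / n!`, so expanding by multilinearity gives `D ≥ 0`.
Multilinearity then also makes `D` monotone on positive semidefinite arguments. A positive
definite `Aᵢ` dominates `εᵢ I` for some `εᵢ > 0`, whence `D(A) ≥ D(ε₁ I, …, εₙ I) = ∏ εᵢ > 0`.
-/

open Matrix Finset

namespace MultilinearMap

variable {ι M N : Type*} [Fintype ι] [AddCommMonoid N] [PartialOrder N] [IsOrderedAddMonoid N]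

theorem map_le_map_add_of_nonneg {R : Type*} [Semiring R] [AddCommMonoid M] [Module R M]
    [Module R N] [DecidableEq ι] (f : MultilinearMap R (fun _ : ι => M) N) {S : Set M}
    (hf : ∀ m : ι → M, (∀ i, m i ∈ S) → 0 ≤ f m) {m m' : ι → M}
    (hm : ∀ i, m i ∈ S) (hm' : ∀ i, m' i ∈ S) : f m ≤ f (m + m') := by
  rw [map_add_univ]
  calc f m = f (univ.piecewise m m') := by rw [piecewise_univ]
    _ ≤ ∑ s : Finset ι, f (s.piecewise m m') :=
      single_le_sum (fun (s : Finset ι) _ =>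
        hf _ fun i => s.piecewise_cases m m' (· ∈ S) (hm i) (hm' i)) (mem_univ _)

theorem map_nonneg_of_posSemidef {m : Type*} [Fintype m] [Module ℝ N]
    (f : MultilinearMap ℝ (fun _ : ι => Matrix m m ℝ) N)
    (hf : ∀ v : ι → m → ℝ, 0 ≤ f fun i => vecMulVec (v i) (v i))
    {A : ι → Matrix m m ℝ} (hA : ∀ i, (A i).PosSemidef) : 0 ≤ f A := by
  classical
  choose k v hv using fun i => posSemidef_iff_eq_sum_vecMulVec.mp (hA i)
  obtain rfl : A = fun i => ∑ j, vecMulVec (v i j) (v i j) := funext hv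
  rw [map_sum]
  exact sum_nonneg fun r _ => hf _

end MultilinearMap

theorem Matrix.PosDef.exists_sub_smul_one_posSemidef {n : Type*} [Fintype n] [DecidableEq n]
    {A : Matrix n n ℝ} (hA : A.PosDef) : ∃ ε : ℝ, 0 < ε ∧ (A - ε • 1).PosSemidef := by
  open scoped MatrixOrder in
  cases isEmpty_or_nonempty n
  · exact ⟨1, one_pos, Subsingleton.elim A (A - (1 : ℝ) • 1) ▸ hA.posSemidef⟩
  · obtain ⟨ε, hε, hle⟩ := (CFC.exists_pos_algebraMap_le_iff hA.isHermitian).mpr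
      fun x hx => hA.isStrictlyPositive.spectrum_pos hx
    exact ⟨ε, hε, by simpa [Matrix.le_iff, Algebra.algebraMap_eq_smul_one] using hle⟩

def Matrix.colLinearMap (R : Type*) {m n : Type*} [Semiring R] (j : n) :
    Matrix m n R →ₗ[R] m → R where
  toFun M i := M i j
  map_add' _ _ := rfl
  map_smul' _ _ := rfl

noncomputable def mixedDiscMultilinear (n : ℕ) :
    MultilinearMap ℝ (fun _ : Fin n => Matrix (Fin n) (Fin n) ℝ) ℝ :=
  (n.factorial : ℝ)⁻¹ • ∑ σ : Equiv.Perm (Fin n),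
    ((detRowAlternating : (Fin n → ℝ) [⋀^Fin n]→ₗ[ℝ] ℝ).toMultilinearMap.compLinearMap
      (colLinearMap ℝ)).domDomCongr σ

theorem mixedDiscMultilinear_apply (n : ℕ) (A : Fin n → Matrix (Fin n) (Fin n) ℝ) :
    mixedDiscMultilinear n A = mixedDisc n A := by
  simp only [mixedDiscMultilinear, mixedDisc, _root_.smul_apply, _root_.sum_apply,
    MultilinearMap.domDomCongr_apply, MultilinearMap.compLinearMap_apply, smul_eq_mul]
  congr 1
  refine sum_congr rfl fun σ _ => ?_
  rw [← det_transpose]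
  rfl

theorem mixedDisc_vecMulVec (n : ℕ) (v : Fin n → Fin n → ℝ) :
    mixedDisc n (fun i => vecMulVec (v i) (v i)) = (n.factorial : ℝ)⁻¹ * (of v).det ^ 2 := by
  have hσ (σ : Equiv.Perm (Fin n)) :
      (of fun i j => vecMulVec (v (σ j)) (v (σ j)) i j).det =
        Equiv.Perm.sign σ * (∏ j, v (σ j) j) * (of v).det := by
    have : (of fun i j => vecMulVec (v (σ j)) (v (σ j)) i j) =
        of fun i j => v (σ j) j * ((of v)ᵀ.submatrix id σ) i j := by
      ext i j
      simp [vecMulVec, mul_comm]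
    rw [this, det_mul_row, det_permute', det_transpose]
    ring
  have hdet : ∑ σ : Equiv.Perm (Fin n), Equiv.Perm.sign σ * ∏ j, v (σ j) j = (of v).det := by
    rw [det_apply']
    rfl
  simp only [mixedDisc, hσ, ← sum_mul, hdet, sq]

theorem mixedDisc_nonneg {n : ℕ} {A : Fin n → Matrix (Fin n) (Fin n) ℝ}
    (hA : ∀ i, (A i).PosSemidef) : 0 ≤ mixedDisc n A := by
  rw [← mixedDiscMultilinear_apply]
  refine (mixedDiscMultilinear n).map_nonneg_of_posSemidef (fun v => ?_) hA
  rw [mixedDiscMultilinear_apply, mixedDisc_vecMulVec]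
  positivity

theorem mixedDisc_le_mixedDisc_add {n : ℕ} {A B : Fin n → Matrix (Fin n) (Fin n) ℝ}
    (hA : ∀ i, (A i).PosSemidef) (hB : ∀ i, (B i).PosSemidef) :
    mixedDisc n A ≤ mixedDisc n (A + B) := by
  simp only [← mixedDiscMultilinear_apply]
  exact (mixedDiscMultilinear n).map_le_map_add_of_nonneg (S := {M | M.PosSemidef})
    (fun _ hm => mixedDiscMultilinear_apply n _ ▸ mixedDisc_nonneg hm) hA hB

theorem mixedDisc_smul_one (n : ℕ) (c : Fin n → ℝ) :
    mixedDisc n (fun i => c i • 1) = ∏ i, c i := by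
  rw [← mixedDiscMultilinear_apply, MultilinearMap.map_smul_univ, mixedDiscMultilinear_apply]
  have : (of fun i j => (1 : Matrix (Fin n) (Fin n) ℝ) i j) = 1 := rfl
  simp [mixedDisc, this, Fintype.card_perm, Nat.factorial_ne_zero]

/-- If `A₁, …, Aₙ` are positive semidefinite real symmetric matrices then
`D(A₁, …, Aₙ) ≥ 0`; if they are positive definite then `D(A₁, …, Aₙ) > 0`. -/
theorem mixedDisc_nonneg_of_posSemidef (n : ℕ)
    (A : Fin n → Matrix (Fin n) (Fin n) ℝ) :
    ((∀ i, (A i).PosSemidef) → 0 ≤ mixedDisc n A) ∧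
    ((∀ i, (A i).PosDef) → 0 < mixedDisc n A) := by
  refine ⟨mixedDisc_nonneg, fun hA => ?_⟩
  choose ε hε hsub using fun i => (hA i).exists_sub_smul_one_posSemidef
  calc 0 < ∏ i, ε i := prod_pos fun i _ => hε i
    _ = mixedDisc n (fun i => ε i • 1) := (mixedDisc_smul_one n ε).symm
    _ ≤ mixedDisc n ((fun i => ε i • 1) + fun i => A i - ε i • 1) :=
      mixedDisc_le_mixedDisc_add (fun i => PosSemidef.one.smul (hε i).le) hsub
    _ = mixedDisc n A := by
      congr 1
      ext i : 1
      exact add_sub_cancel _ _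
end

section
/- Let p(x) = Σ_{k=0}^{n} C(n,k) a_k x^k be a univariate real polynomial all of whose roots are real. Then a_k² ≥ a_{k-1} a_{k+1} for all 1 ≤ k ≤ n−1. -/
/-! Differentiating `k - 1` times, reflecting `x ↦ x⁻¹` and differentiating `n - k - 1` more
times turns `∑ C(n,j) aⱼ xʲ` into a positive multiple of the quadratic
`a_{k+1} + 2 aₖ x + a_{k-1} x²`. Both operations preserve real-rootedness (Rolle's theorem for
the derivative), so this quadratic has a real root and hence a nonnegative discriminant. -/

open Polynomial

namespace Polynomial

section Splits

theorem Splits.derivative {f : ℝ[X]} (hf : f.Splits) : (Polynomial.derivative f).Splits := by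
  rw [splits_iff_card_roots] at hf ⊢
  have := card_roots_le_derivative f
  have := card_roots' (Polynomial.derivative f)
  have := natDegree_derivative_le f
  omega

theorem Splits.iterate_derivative {f : ℝ[X]} (hf : f.Splits) (r : ℕ) :
    (Polynomial.derivative^[r] f).Splits := by
  induction r with
  | zero => exact hf
  | succ r ih => rw [Function.iterate_succ_apply']; exact ih.derivative

variable {K : Type*} [Field K]

theorem Splits.reverse {f : K[X]} (hf : f.Splits) : f.reverse.Splits := by
  induction hf using Submonoid.closure_induction with
  | mem g hg =>
    obtain ⟨a, rfl⟩ | ⟨a, rfl⟩ := hg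
    · simp
    · exact .of_natDegree_le_one ((reverse_natDegree_le _).trans (natDegree_X_add_C a).le)
  | one => rw [← C_1, reverse_C]; exact .C 1
  | mul f g _ _ hf hg => rw [reverse_mul_of_domain]; exact hf.mul hg

theorem Splits.reflect {f : K[X]} (hf : f.Splits) {N : ℕ} (hN : f.natDegree ≤ N) :
    (f.reflect N).Splits := by
  have h := reflect_mul f 1 le_rfl (natDegree_one.trans_le (Nat.zero_le (N - f.natDegree)))
  rw [mul_one, Nat.add_sub_cancel' hN, reflect_one] at h
  rw [h]
  exact hf.reverse.mul (.X_pow _)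

theorem Splits.discrim_nonneg {f : ℝ[X]} (hf : f.Splits) (hdeg : f.natDegree ≤ 2) :
    0 ≤ discrim (f.coeff 2) (f.coeff 1) (f.coeff 0) := by
  by_cases h2 : f.coeff 2 = 0
  · rw [discrim, h2, mul_zero, zero_mul, sub_zero]; positivity
  obtain ⟨x, hx⟩ :=
    hf.exists_eval_eq_zero ((lt_of_lt_of_le (by decide) (le_degree_of_ne_zero h2)).ne')
  rw [eval_eq_sum_range' (Nat.lt_succ_of_le hdeg), Finset.sum_range_succ, Finset.sum_range_succ,
    Finset.sum_range_one] at hx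
  rw [discrim_eq_sq_of_quadratic_eq_zero (x := x) (by linear_combination hx)]
  positivity

theorem splits_of_forall_im_eq_zero {f : ℝ[X]}
    (h : ∀ z : ℂ, (f.map (algebraMap ℝ ℂ)).IsRoot z → z.im = 0) : f.Splits :=
  .of_splits_map _ (IsAlgClosed.splits _) fun z hz ↦
    ⟨z.re, Complex.ext rfl (h z (isRoot_of_mem_roots hz)).symm⟩

end Splits

section BinomialSum

variable {R : Type*} [CommSemiring R]

noncomputable def binomialSum (n : ℕ) (a : ℕ → R) : R[X] :=
  ∑ k ∈ Finset.range (n + 1), C ((n.choose k : R) * a k) * X ^ k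

theorem coeff_binomialSum (n : ℕ) (a : ℕ → R) (j : ℕ) :
    (binomialSum n a).coeff j = n.choose j * a j := by
  simp only [binomialSum, finsetSum_coeff, coeff_C_mul_X_pow, Finset.sum_ite_eq,
    Finset.mem_range]
  split_ifs with hj
  · rfl
  · rw [Nat.choose_eq_zero_of_lt (by omega), Nat.cast_zero, zero_mul]

theorem natDegree_binomialSum_le (n : ℕ) (a : ℕ → R) : (binomialSum n a).natDegree ≤ n :=
  natDegree_le_iff_coeff_eq_zero.2 fun j hj ↦ by
    rw [coeff_binomialSum, Nat.choose_eq_zero_of_lt (by exact_mod_cast hj), Nat.cast_zero,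
      zero_mul]

theorem derivative_binomialSum (n : ℕ) (a : ℕ → R) :
    derivative (binomialSum (n + 1) a) = binomialSum n fun j ↦ (n + 1) * a (j + 1) := by
  ext j
  rw [coeff_derivative, coeff_binomialSum, coeff_binomialSum]
  have h := Nat.add_one_mul_choose_eq n j
  calc _ = (((n + 1).choose (j + 1) * (j + 1) : ℕ) : R) * a (j + 1) := by push_cast; ring
    _ = _ := by rw [← h]; push_cast; ring

theorem iterate_derivative_binomialSum (m r : ℕ) (a : ℕ → R) :
    derivative^[r] (binomialSum (m + r) a) =
      binomialSum m fun j ↦ ((m + r).descFactorial r : R) * a (j + r) := by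
  induction r generalizing a with
  | zero => simp
  | succ r ih =>
    rw [Function.iterate_succ_apply, ← add_assoc, derivative_binomialSum, ih]
    congr! 2 with j
    rw [Nat.succ_descFactorial_succ, ← add_assoc]
    push_cast
    ring

theorem reflect_binomialSum (n : ℕ) (a : ℕ → R) :
    (binomialSum n a).reflect n = binomialSum n fun j ↦ a (n - j) := by
  ext j
  rw [coeff_reflect, coeff_binomialSum, coeff_binomialSum]
  rcases le_or_gt j n with hj | hj
  · rw [revAt_le hj, Nat.choose_symm hj]
  · rw [revAt_eq_self_of_lt hj, Nat.choose_eq_zero_of_lt hj, Nat.cast_zero, zero_mul, zero_mul]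

theorem mul_le_sq_of_splits_binomialSum_two {b : ℕ → ℝ} (h : (binomialSum 2 b).Splits) :
    b 0 * b 2 ≤ b 1 ^ 2 := by
  have hdisc := h.discrim_nonneg (natDegree_binomialSum_le 2 b)
  simp only [discrim, coeff_binomialSum, Nat.choose_self, Nat.choose_one_right,
    Nat.choose_zero_right] at hdisc
  push_cast at hdisc
  linarith

end BinomialSum

end Polynomial

/-- Newton's inequality: if `p(x) = Σ_{k=0}^{n} C(n,k) a_k x^k` has only real roots,
then `a_k² ≥ a_{k-1} a_{k+1}` for all `1 ≤ k ≤ n − 1`. -/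
theorem newton_inequality (n : ℕ) (a : ℕ → ℝ) (p : Polynomial ℝ)
    (hp : p = ∑ k ∈ Finset.range (n + 1),
      Polynomial.C ((n.choose k : ℝ) * a k) * Polynomial.X ^ k)
    (hroots : ∀ z : ℂ, (p.map (algebraMap ℝ ℂ)).IsRoot z → z.im = 0)
    (k : ℕ) (hk1 : 1 ≤ k) (hk2 : k ≤ n - 1) :
    a (k - 1) * a (k + 1) ≤ (a k) ^ 2 := by
  obtain ⟨i, rfl⟩ : ∃ i, k = i + 1 := ⟨k - 1, by omega⟩
  obtain ⟨m, rfl⟩ : ∃ m, n = m + 2 + i := ⟨n - i - 2, by omega⟩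
  have hsplit : (binomialSum (m + 2 + i) a).Splits := by
    rw [binomialSum, ← hp]; exact splits_of_forall_im_eq_zero hroots
  have hderiv := hsplit.iterate_derivative i
  rw [iterate_derivative_binomialSum] at hderiv
  have hrefl := hderiv.reflect (natDegree_binomialSum_le _ _)
  rw [reflect_binomialSum, add_comm m 2] at hrefl
  have hquadSplits := hrefl.iterate_derivative m
  rw [iterate_derivative_binomialSum] at hquadSplits
  have hquad := mul_le_sq_of_splits_binomialSum_two hquadSplits
  simp only [show 2 + m - (0 + m) + i = i + 2 by omega, show 2 + m - (1 + m) + i = i + 1 by omega,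
    show 2 + m - (2 + m) + i = i by omega] at hquad
  have hc₁ : (0 : ℝ) < (2 + m + i).descFactorial i :=
    mod_cast Nat.descFactorial_pos.2 (by omega)
  have hc₂ : (0 : ℝ) < (2 + m).descFactorial m := mod_cast Nat.descFactorial_pos.2 (by omega)
  rw [Nat.add_sub_cancel]
  refine le_of_mul_le_mul_left ?_ (pow_pos (mul_pos hc₂ hc₁) 2)
  linear_combination hquad
end

section
/- Let M be a real symmetric n × n matrix. Then M is hyperbolic (i.e., for all v, w ∈ ℝⁿ with ⟨w, Mw⟩ ≥ 0 one has ⟨v, Mw⟩² ≥ ⟨v, Mv⟩⟨w, Mw⟩) if and only if M has at most one positive eigenvalue (counted with multiplicity). -/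
/-!
Hyperbolicity is invariant under congruence `M ↦ Pᵀ M P` with `P` invertible, so by the spectral
theorem it suffices to treat `M = diagonal μ`. Two positive weights `μ i`, `μ j` violate the
inequality at the basis vectors `eᵢ, eⱼ`. Conversely, if `μ k` is the only positive weight and
`⟨y, M y⟩ > 0`, then `z = x + t y` with `t` chosen so that `z k = 0` has `⟨z, M z⟩ ≤ 0`; a quadratic
in `t` with positive leading coefficient `⟨y, M y⟩` that takes a non-positive value has a
non-negative discriminant, which is the claimed inequality.
-/

open Matrix Finset

namespace Matrix

theorem dotProduct_transpose_mul_mul_mulVec {ι κ R : Type*} [Fintype ι] [Fintype κ]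
    [CommSemiring R] (M : Matrix κ κ R) (P : Matrix κ ι R) (v w : ι → R) :
    v ⬝ᵥ (Pᵀ * M * P) *ᵥ w = (P *ᵥ v) ⬝ᵥ M *ᵥ (P *ᵥ w) := by
  rw [← mulVec_mulVec, ← mulVec_mulVec, dotProduct_mulVec, vecMul_transpose]

section Congruence

variable {ι κ R : Type*} [Fintype ι] [Fintype κ] [CommRing R] [LE R]

def IsHyperbolicForm (M : Matrix ι ι R) : Prop :=
  ∀ v w : ι → R, 0 ≤ w ⬝ᵥ M *ᵥ w → (v ⬝ᵥ M *ᵥ v) * (w ⬝ᵥ M *ᵥ w) ≤ (v ⬝ᵥ M *ᵥ w) ^ 2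

theorem IsHyperbolicForm.transpose_mul_mul {M : Matrix κ κ R} (h : M.IsHyperbolicForm)
    (P : Matrix κ ι R) : (Pᵀ * M * P).IsHyperbolicForm := by
  intro v w hw
  simp only [dotProduct_transpose_mul_mul_mulVec] at hw ⊢
  exact h _ _ hw

theorem isHyperbolicForm_transpose_mul_mul_iff [DecidableEq ι] {M P : Matrix ι ι R}
    (hP : IsUnit P) : (Pᵀ * M * P).IsHyperbolicForm ↔ M.IsHyperbolicForm := by
  refine ⟨fun h => ?_, fun h => h.transpose_mul_mul P⟩
  have hP' : P * P⁻¹ = 1 := mul_nonsing_inv P ((isUnit_iff_isUnit_det P).mp hP)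
  convert h.transpose_mul_mul P⁻¹ using 1
  rw [Matrix.mul_assoc, Matrix.mul_assoc, hP', mul_one, ← Matrix.mul_assoc, ← transpose_mul, hP',
    transpose_one, one_mul]

end Congruence

variable {ι R : Type*} [Fintype ι]

theorem IsSymm.mul_le_sq_of_add_smul_nonpos [CommRing R] [LinearOrder R] [IsStrictOrderedRing R]
    {M : Matrix ι ι R} (hM : M.IsSymm) {x y : ι → R}
    {t : R} (hy : 0 < y ⬝ᵥ M *ᵥ y) (hxy : (x + t • y) ⬝ᵥ M *ᵥ (x + t • y) ≤ 0) :
    (x ⬝ᵥ M *ᵥ x) * (y ⬝ᵥ M *ᵥ y) ≤ (x ⬝ᵥ M *ᵥ y) ^ 2 := by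
  have hyx : y ⬝ᵥ M *ᵥ x = x ⬝ᵥ M *ᵥ y := by
    rw [dotProduct_mulVec, ← mulVec_transpose, hM.eq, dotProduct_comm]
  simp only [mulVec_add, mulVec_smul, add_dotProduct, dotProduct_add, smul_dotProduct,
    dotProduct_smul, smul_eq_mul, hyx] at hxy
  -- `⟨y, M y⟩ · ⟨x + t y, M (x + t y)⟩ = (t ⟨y, M y⟩ + ⟨x, M y⟩)² + ⟨x, M x⟩⟨y, M y⟩ - ⟨x, M y⟩²`
  nlinarith [sq_nonneg (t * (y ⬝ᵥ M *ᵥ y) + x ⬝ᵥ M *ᵥ y), mul_le_mul_of_nonneg_left hxy hy.le]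

theorem dotProduct_diagonal_mulVec_self [CommSemiring R] [DecidableEq ι] (μ v : ι → R) :
    v ⬝ᵥ diagonal μ *ᵥ v = ∑ i, μ i * v i ^ 2 := by
  simp only [dotProduct, mulVec_diagonal]
  exact sum_congr rfl fun i _ => by ring

variable [Field R] [LinearOrder R] [IsStrictOrderedRing R] [DecidableEq ι] {μ : ι → R}

theorem isHyperbolicForm_diagonal_of_card_pos_le_one (hμ : #{i | 0 < μ i} ≤ 1) :
    (diagonal μ).IsHyperbolicForm := by
  intro x y hy
  rcases hy.eq_or_lt with hy0 | hy
  · rw [← hy0, mul_zero]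
    positivity
  obtain ⟨k, -, hk⟩ := exists_lt_of_sum_lt (f := fun _ => (0 : R)) (s := univ)
    (by simpa [dotProduct_diagonal_mulVec_self] using hy)
  have hμk : 0 < μ k := pos_of_mul_pos_left hk (sq_nonneg _)
  have hyk : y k ≠ 0 := fun h => by simp [h] at hk
  have hμ_nonpos : ∀ i ≠ k, μ i ≤ 0 := fun i hik => not_lt.mp fun hμi =>
    hik (card_le_one.mp hμ i (by simpa using hμi) k (by simpa using hμk))
  refine (isSymm_diagonal μ).mul_le_sq_of_add_smul_nonpos hy (t := -(x k / y k)) ?_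
  rw [dotProduct_diagonal_mulVec_self]
  refine sum_nonpos fun i _ => ?_
  rcases eq_or_ne i k with rfl | hik
  · simp [hyk]
  · exact mul_nonpos_of_nonpos_of_nonneg (hμ_nonpos i hik) (sq_nonneg _)

theorem card_pos_le_one_of_isHyperbolicForm_diagonal (h : (diagonal μ).IsHyperbolicForm) :
    #{i | 0 < μ i} ≤ 1 := by
  refine card_le_one.mpr fun i hi j hj => by_contra fun hij => ?_
  simp only [mem_filter, mem_univ, true_and] at hi hj
  have hμij : μ i * μ j ≤ 0 := by
    simpa [dotProduct, mulVec_diagonal, Pi.single_apply, Ne.symm hij, hj.le] using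
      h (Pi.single i 1) (Pi.single j 1)
  exact hμij.not_gt (mul_pos hi hj)

theorem isHyperbolicForm_diagonal_iff : (diagonal μ).IsHyperbolicForm ↔ #{i | 0 < μ i} ≤ 1 :=
  ⟨card_pos_le_one_of_isHyperbolicForm_diagonal, isHyperbolicForm_diagonal_of_card_pos_le_one⟩

end Matrix

theorem Matrix.IsHermitian.eq_mul_diagonal_mul_transpose {n : Type*} [Fintype n] [DecidableEq n]
    {M : Matrix n n ℝ} (hM : M.IsHermitian) :
    M = (hM.eigenvectorUnitary : Matrix n n ℝ) * diagonal hM.eigenvalues *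
      (hM.eigenvectorUnitary : Matrix n n ℝ)ᵀ := by
  conv_lhs => rw [hM.spectral_theorem]
  simp [Unitary.conjStarAlgAut_apply, RCLike.ofReal_real_eq_id, star_eq_conjTranspose]

/-- A real symmetric matrix `M` is hyperbolic (for all `v, w` with `⟨w, Mw⟩ ≥ 0` one has
`⟨v, Mw⟩² ≥ ⟨v, Mv⟩⟨w, Mw⟩`) if and only if it has at most one positive eigenvalue
(counted with multiplicity). -/
theorem hyperbolic_iff_atMostOne_pos_eigenvalue (n : ℕ)
    (M : Matrix (Fin n) (Fin n) ℝ) (hM : M.IsHermitian) :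
    (∀ v w : Fin n → ℝ, 0 ≤ w ⬝ᵥ M.mulVec w →
        (v ⬝ᵥ M.mulVec v) * (w ⬝ᵥ M.mulVec w) ≤ (v ⬝ᵥ M.mulVec w) ^ 2)
      ↔ (Finset.univ.filter fun i => 0 < hM.eigenvalues i).card ≤ 1 := by
  set U : Matrix (Fin n) (Fin n) ℝ := ↑hM.eigenvectorUnitary
  calc M.IsHyperbolicForm ↔ (Uᵀᵀ * diagonal hM.eigenvalues * Uᵀ).IsHyperbolicForm := by
        rw [transpose_transpose, ← hM.eq_mul_diagonal_mul_transpose]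
    _ ↔ (diagonal hM.eigenvalues).IsHyperbolicForm :=
        isHyperbolicForm_transpose_mul_mul_iff ((isUnit_transpose U).mpr Unitary.isUnit_coe)
    _ ↔ _ := isHyperbolicForm_diagonal_iff
end

section
/- Let A be an n × n Hermitian matrix and B the principal (n−1) × (n−1) submatrix obtained by deleting the last row and column. If λₙ ≤ ⋯ ≤ λ₁ are the eigenvalues of A and μₙ ≤ ⋯ ≤ μ₂ are the eigenvalues of B, then λ_{k+1} ≤ μ_{k+1} ≤ λ_k for all 1 ≤ k ≤ n−1 (the eigenvalues interlace). -/
/-!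
Extension by zero `J` is an isometry with `⟪J x, A (J x)⟫ = ⟪x, B x⟫`, so `A` and `B` have
the same Rayleigh quotient at `J x` and at `x`. The span of the eigenvectors of `A` for
`lam k, …, lam n` (dimension `n + 1 - k`) and the image under `J` of the span of the eigenvectors
of `B` for `mu 0, …, mu k` (dimension `k + 1`) meet nontrivially in the `(n + 1)`-dimensional
space, and at a common nonzero vector the Rayleigh quotient is both `≥ lam k` and `≤ mu k`.
Exchanging low and high eigenvalues gives `mu k ≤ lam (k + 1)`.
-/

open Module Submodule
open scoped InnerProductSpace

namespace Submodule

variable {K V : Type*} [DivisionRing K] [AddCommGroup V] [Module K V] [FiniteDimensional K V]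

theorem exists_mem_inf_ne_zero_of_finrank_lt_add {s t : Submodule K V}
    (h : finrank K V < finrank K s + finrank K t) : ∃ x ∈ s ⊓ t, x ≠ 0 := by
  refine exists_mem_ne_zero_of_ne_bot fun hbot => h.not_ge ?_
  calc finrank K s + finrank K t = finrank K ↥(s ⊔ t) + finrank K ↥(s ⊓ t) :=
        (finrank_sup_add_finrank_inf_eq s t).symm
    _ ≤ finrank K V := by rw [hbot, finrank_bot, add_zero]; exact finrank_le _

end Submodule

namespace OrthonormalBasis

variable {𝕜 E ι : Type*} [RCLike 𝕜] [NormedAddCommGroup E] [InnerProductSpace 𝕜 E]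
  [Fintype ι] (b : OrthonormalBasis ι 𝕜 E)

theorem finrank_span_image (s : Finset ι) : finrank 𝕜 (span 𝕜 (b '' s)) = s.card := by
  rw [Set.image_eq_range]
  exact (finrank_span_eq_card
    (b.orthonormal.linearIndependent.comp _ Subtype.val_injective)).trans (by simp)

theorem inner_eq_zero_of_mem_span_image {s : Set ι} {x : E} (hx : x ∈ span 𝕜 (b '' s))
    {i : ι} (hi : i ∉ s) : ⟪b i, x⟫_𝕜 = 0 := by
  rw [← b.coe_toBasis, Basis.mem_span_image] at hx
  rw [← b.repr_apply_apply, ← b.coe_toBasis_repr_apply]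
  exact Finsupp.notMem_support_iff.mp fun h => hi (hx h)

variable {T : E →ₗ[𝕜] E} {c : ι → ℝ}

theorem inner_apply_eq_mul_inner (hc : ∀ i, T (b i) = (c i : 𝕜) • b i) (x : E) (i : ι) :
    ⟪b i, T x⟫_𝕜 = c i * ⟪b i, x⟫_𝕜 := by
  classical
  conv_lhs => rw [← b.sum_repr x]
  simp [hc, inner_sum, inner_smul_right, b.repr_apply_apply, b.inner_eq_ite, mul_comm]

theorem re_inner_self_apply_eq_sum (hc : ∀ i, T (b i) = (c i : 𝕜) • b i) (x : E) :
    RCLike.re ⟪x, T x⟫_𝕜 = ∑ i, c i * ‖⟪b i, x⟫_𝕜‖ ^ 2 := by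
  rw [← b.sum_inner_mul_inner, map_sum]
  refine Finset.sum_congr rfl fun i _ => ?_
  rw [b.inner_apply_eq_mul_inner hc, ← inner_conj_symm, mul_left_comm, RCLike.conj_mul]
  norm_cast

variable {s : Set ι} {M : ℝ} {x : E}

theorem re_inner_self_apply_le_of_mem_span_image (hc : ∀ i, T (b i) = (c i : 𝕜) • b i)
    (hM : ∀ i ∈ s, c i ≤ M) (hx : x ∈ span 𝕜 (b '' s)) :
    RCLike.re ⟪x, T x⟫_𝕜 ≤ M * ‖x‖ ^ 2 := by
  rw [b.re_inner_self_apply_eq_sum hc, ← b.sum_sq_norm_inner_right, Finset.mul_sum]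
  refine Finset.sum_le_sum fun i _ => ?_
  by_cases hi : i ∈ s
  · exact mul_le_mul_of_nonneg_right (hM i hi) (by positivity)
  · simp [b.inner_eq_zero_of_mem_span_image hx hi]

theorem le_re_inner_self_apply_of_mem_span_image (hc : ∀ i, T (b i) = (c i : 𝕜) • b i)
    (hM : ∀ i ∈ s, M ≤ c i) (hx : x ∈ span 𝕜 (b '' s)) :
    M * ‖x‖ ^ 2 ≤ RCLike.re ⟪x, T x⟫_𝕜 := by
  have := b.re_inner_self_apply_le_of_mem_span_image (T := -T) (c := -c) (by simp [hc])
    (fun i hi => neg_le_neg (hM i hi)) hx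
  simpa [inner_neg_right] using this

end OrthonormalBasis

section Compression

variable {𝕜 E F ι κ : Type*} [RCLike 𝕜] [NormedAddCommGroup E] [InnerProductSpace 𝕜 E]
  [NormedAddCommGroup F] [InnerProductSpace 𝕜 F] [Fintype ι] [Fintype κ]

theorem exists_ne_zero_map_mem_span_image_of_card_lt {J : E →ₗ[𝕜] F}
    (hJ : Function.Injective J)
    (bF : OrthonormalBasis ι 𝕜 F) (bE : OrthonormalBasis κ 𝕜 E) (sF : Finset ι) (sE : Finset κ)
    (h : Fintype.card ι < sF.card + sE.card) :
    ∃ y ≠ 0, J y ∈ span 𝕜 (bF '' sF) ∧ y ∈ span 𝕜 (bE '' sE) := by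
  have : FiniteDimensional 𝕜 F := bF.toBasis.finiteDimensional_of_finite
  have hdim : finrank 𝕜 F <
      finrank 𝕜 (span 𝕜 (bF '' sF)) + finrank 𝕜 ((span 𝕜 (bE '' sE)).map J) := by
    rwa [← (equivMapOfInjective J hJ _).finrank_eq, bF.finrank_span_image, bE.finrank_span_image,
      finrank_eq_card_basis bF.toBasis]
  obtain ⟨x, ⟨hxF, y, hyE, rfl⟩, hx⟩ := exists_mem_inf_ne_zero_of_finrank_lt_add hdim
  exact ⟨y, by rintro rfl; simp at hx, hxF, hyE⟩

theorem interlacing_of_compression {n : ℕ} (J : E →ₗᵢ[𝕜] F) {S : F →ₗ[𝕜] F}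
    {T : E →ₗ[𝕜] E}
    (hJ : ∀ x, ⟪J x, S (J x)⟫_𝕜 = ⟪x, T x⟫_𝕜)
    (bF : OrthonormalBasis (Fin (n + 1)) 𝕜 F) {lam : Fin (n + 1) → ℝ} (hlam : Monotone lam)
    (hS : ∀ i, S (bF i) = (lam i : 𝕜) • bF i)
    (bE : OrthonormalBasis (Fin n) 𝕜 E) {mu : Fin n → ℝ} (hmu : Monotone mu)
    (hT : ∀ i, T (bE i) = (mu i : 𝕜) • bE i) (k : Fin n) :
    lam k.castSucc ≤ mu k ∧ mu k ≤ lam k.succ := by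
  constructor
  · obtain ⟨y, hy, hyF, hyE⟩ := exists_ne_zero_map_mem_span_image_of_card_lt J.injective bF bE
      (Finset.Ici k.castSucc) (Finset.Iic k) (by
        simp only [Fintype.card_fin, Fin.card_Ici, Fin.card_Iic, Fin.val_castSucc]
        omega)
    refine le_of_mul_le_mul_right ?_ (by positivity : 0 < ‖y‖ ^ 2)
    calc lam k.castSucc * ‖y‖ ^ 2 = lam k.castSucc * ‖J y‖ ^ 2 := by rw [J.norm_map]
      _ ≤ RCLike.re ⟪J y, S (J y)⟫_𝕜 :=
        bF.le_re_inner_self_apply_of_mem_span_image hS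
          (fun i hi => hlam (Finset.mem_Ici.mp hi)) hyF
      _ = RCLike.re ⟪y, T y⟫_𝕜 := by rw [hJ]
      _ ≤ mu k * ‖y‖ ^ 2 :=
        bE.re_inner_self_apply_le_of_mem_span_image hT
          (fun j hj => hmu (Finset.mem_Iic.mp hj)) hyE
  · obtain ⟨y, hy, hyF, hyE⟩ := exists_ne_zero_map_mem_span_image_of_card_lt J.injective bF bE
      (Finset.Iic k.succ) (Finset.Ici k) (by
        simp only [Fintype.card_fin, Fin.card_Ici, Fin.card_Iic, Fin.val_succ]
        omega)
    refine le_of_mul_le_mul_right ?_ (by positivity : 0 < ‖y‖ ^ 2)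
    calc mu k * ‖y‖ ^ 2 ≤ RCLike.re ⟪y, T y⟫_𝕜 :=
        bE.le_re_inner_self_apply_of_mem_span_image hT
          (fun j hj => hmu (Finset.mem_Ici.mp hj)) hyE
      _ = RCLike.re ⟪J y, S (J y)⟫_𝕜 := by rw [hJ]
      _ ≤ lam k.succ * ‖J y‖ ^ 2 :=
        bF.re_inner_self_apply_le_of_mem_span_image hS
          (fun i hi => hlam (Finset.mem_Iic.mp hi)) hyF
      _ = lam k.succ * ‖y‖ ^ 2 := by rw [J.norm_map]

end Compression

namespace Matrix

variable {𝕜 m n : Type*} [RCLike 𝕜] [Fintype n] [DecidableEq n]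

theorem IsHermitian.toEuclideanLin_eigenvectorBasis {A : Matrix n n 𝕜} (hA : A.IsHermitian)
    (j : n) :
    toEuclideanLin A (hA.eigenvectorBasis j) = (hA.eigenvalues j : 𝕜) • hA.eigenvectorBasis j :=
  WithLp.ofLp_injective _ <| by
    simpa [RCLike.real_smul_eq_coe_smul] using hA.mulVec_eigenvectorBasis j

theorem conjTranspose_mul_mul_submatrix_one (A : Matrix n n 𝕜) (e : m → n) :
    ((1 : Matrix n n 𝕜).submatrix id e)ᴴ * A * (1 : Matrix n n 𝕜).submatrix id e =
      A.submatrix e e := by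
  ext i j
  simp [mul_apply, one_apply]

variable [Fintype m] [DecidableEq m]

theorem inner_toEuclideanLin_toEuclideanLin (P : Matrix n m 𝕜) (A : Matrix n n 𝕜)
    (x y : EuclideanSpace 𝕜 m) :
    ⟪toEuclideanLin P x, toEuclideanLin A (toEuclideanLin P y)⟫_𝕜 =
      ⟪x, toEuclideanLin (Pᴴ * A * P) y⟫_𝕜 := by
  rw [← LinearMap.adjoint_inner_right, ← toEuclideanLin_conjTranspose_eq_adjoint,
    Matrix.mul_assoc, toLpLin_mul_same, toLpLin_mul_same]
  rfl

end Matrix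

namespace EuclideanSpace

variable (𝕜 : Type*) [RCLike 𝕜] {m n : Type*} [Fintype m] [Fintype n] [DecidableEq m]
  [DecidableEq n] {e : m → n}

noncomputable def extendByZero (he : Function.Injective e) :
    EuclideanSpace 𝕜 m →ₗᵢ[𝕜] EuclideanSpace 𝕜 n :=
  (Matrix.toEuclideanLin ((1 : Matrix n n 𝕜).submatrix id e)).isometryOfInner fun x y => by
    have := Matrix.inner_toEuclideanLin_toEuclideanLin ((1 : Matrix n n 𝕜).submatrix id e) 1 x y
    rwa [Matrix.conjTranspose_mul_mul_submatrix_one, Matrix.submatrix_one _ he,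
      Matrix.toLpLin_one, Matrix.toLpLin_one] at this

variable {𝕜}

theorem inner_extendByZero_toEuclideanLin (he : Function.Injective e) (A : Matrix n n 𝕜)
    (x : EuclideanSpace 𝕜 m) :
    ⟪extendByZero 𝕜 he x, Matrix.toEuclideanLin A (extendByZero 𝕜 he x)⟫_𝕜 =
      ⟪x, Matrix.toEuclideanLin (A.submatrix e e) x⟫_𝕜 := by
  rw [← Matrix.conjTranspose_mul_mul_submatrix_one]
  exact Matrix.inner_toEuclideanLin_toEuclideanLin _ A x x

end EuclideanSpace

/-- Cauchy interlacing theorem: if `A` is an `(n+1) × (n+1)` Hermitian matrix and `B`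
is the principal submatrix obtained by deleting the last row and column, then the
increasingly-ordered eigenvalues `lam` of `A` and `mu` of `B` interlace:
`lam k ≤ mu k ≤ lam (k+1)`. -/
theorem cauchy_interlacing (n : ℕ)
    (A : Matrix (Fin (n + 1)) (Fin (n + 1)) ℂ) (hA : A.IsHermitian)
    (B : Matrix (Fin n) (Fin n) ℂ) (hB : B = A.submatrix Fin.castSucc Fin.castSucc)
    (hBH : B.IsHermitian)
    (lam : Fin (n + 1) → ℝ) (mu : Fin n → ℝ)
    (hlam_mono : Monotone lam) (hmu_mono : Monotone mu)
    (hlam : ∃ σ : Equiv.Perm (Fin (n + 1)), lam = hA.eigenvalues ∘ σ)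
    (hmu : ∃ σ : Equiv.Perm (Fin n), mu = hBH.eigenvalues ∘ σ) :
    ∀ k : Fin n, lam k.castSucc ≤ mu k ∧ mu k ≤ lam k.succ := by
  obtain ⟨σ, rfl⟩ := hlam
  obtain ⟨τ, rfl⟩ := hmu
  subst hB
  exact interlacing_of_compression (EuclideanSpace.extendByZero ℂ (Fin.castSucc_injective n))
    (EuclideanSpace.inner_extendByZero_toEuclideanLin _ A)
    (hA.eigenvectorBasis.reindex σ.symm) hlam_mono
    (fun i => by simp [hA.toEuclideanLin_eigenvectorBasis])
    (hBH.eigenvectorBasis.reindex τ.symm) hmu_mono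
    (fun i => by simp [hBH.toEuclideanLin_eigenvectorBasis])
end

section
/- Let M be an n × n symmetric real matrix with exactly one positive eigenvalue, and let A be a 2 × 2 principal submatrix of M such that there exists v ∈ ℝ² with vᵀAv > 0. Then det(A) ≤ 0. -/
/-!
If `det A > 0`, the two eigenvalues of the symmetric matrix `A` have the same sign, and a vector
with `vᵀ A v > 0` forces them to be positive, so `A` is positive definite. But a Hermitian matrix
`M` can be positive definite on a subspace `W` only if `dim W` is at most the number of positive
eigenvalues of `M`: otherwise some nonzero `w ∈ W` is orthogonal to all eigenvectors with positive
eigenvalue, and then `wᴴ M w ≤ 0`. Applied to the coordinate plane of the principal submatrix `A`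
this gives `2 ≤ 1`.
-/

open Matrix
open scoped ComplexOrder

namespace Matrix

theorem exists_mulVec_eq_zero_of_card_lt {K p q : Type*} [Field K] [Fintype p] [Fintype q]
    [DecidableEq q] (A : Matrix p q K) (h : Fintype.card p < Fintype.card q) :
    ∃ w ≠ 0, A *ᵥ w = 0 := by
  have hker : LinearMap.ker (toLin' A) ≠ ⊥ := LinearMap.ker_ne_bot_of_finrank_lt <| by
    simpa only [Module.finrank_fintype_fun_eq_card] using h
  obtain ⟨w, hw, hw0⟩ := Submodule.exists_mem_ne_zero_of_ne_bot hker
  exact ⟨w, hw0, hw⟩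

section

variable {m n : Type*} [Fintype n] [DecidableEq n]

theorem submatrix_eq_conjTranspose_mul_mul {α : Type*} [Semiring α] [StarRing α]
    (M : Matrix n n α) (f : m → n) :
    M.submatrix f f =
      ((1 : Matrix n n α).submatrix id f)ᴴ * M * (1 : Matrix n n α).submatrix id f := by
  ext i j
  simp [mul_apply, one_apply]

variable {𝕜 : Type*} [RCLike 𝕜]

theorem IsHermitian.re_dotProduct_mulVec_eq_sum {M : Matrix n n 𝕜} (hM : M.IsHermitian)
    (x : n → 𝕜) :
    RCLike.re (star x ⬝ᵥ (M *ᵥ x)) =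
      ∑ i, hM.eigenvalues i * ‖(star (hM.eigenvectorUnitary : Matrix n n 𝕜) *ᵥ x) i‖ ^ 2 := by
  conv_lhs => rw [hM.spectral_theorem, Unitary.conjStarAlgAut_apply]
  rw [← mulVec_mulVec, ← mulVec_mulVec, dotProduct_mulVec, ← star_star (_ ᵥ* _), star_vecMul,
    star_star, ← star_eq_conjTranspose, dotProduct, map_sum]
  refine Finset.sum_congr rfl fun i _ ↦ ?_
  rw [mulVec_diagonal, Function.comp_apply, Pi.star_apply, RCLike.star_def, mul_left_comm,
    RCLike.conj_mul, ← RCLike.ofReal_pow, ← RCLike.ofReal_mul, RCLike.ofReal_re]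

theorem posDef_of_re_det_pos_of_re_dotProduct_pos {A : Matrix (Fin 2) (Fin 2) 𝕜}
    (hA : A.IsHermitian) (hdet : 0 < RCLike.re A.det) {v : Fin 2 → 𝕜}
    (hv : 0 < RCLike.re (star v ⬝ᵥ (A *ᵥ v))) : A.PosDef := by
  have hprod : 0 < hA.eigenvalues 0 * hA.eigenvalues 1 := by
    rwa [hA.det_eq_prod_eigenvalues, Fin.prod_univ_two, ← RCLike.ofReal_mul,
      RCLike.ofReal_re] at hdet
  rw [hA.posDef_iff_eigenvalues_pos, Fin.forall_fin_two]
  refine (pos_and_pos_or_neg_and_neg_of_mul_pos hprod).resolve_right fun hneg ↦ ?_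
  rw [hA.re_dotProduct_mulVec_eq_sum] at hv
  refine hv.not_ge (Finset.sum_nonpos fun i _ ↦ mul_nonpos_of_nonpos_of_nonneg ?_ (sq_nonneg _))
  fin_cases i
  exacts [hneg.1.le, hneg.2.le]

variable [Fintype m]

theorem IsHermitian.card_le_card_pos_eigenvalues_of_posDef {M : Matrix n n 𝕜}
    (hM : M.IsHermitian) {B : Matrix n m 𝕜} (hB : (Bᴴ * M * B).PosDef) :
    Fintype.card m ≤ (Finset.univ.filter fun i => 0 < hM.eigenvalues i).card := by
  classical
  by_contra! hlt
  set U : Matrix n n 𝕜 := ↑hM.eigenvectorUnitary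
  obtain ⟨w, hw0, hw⟩ := exists_mulVec_eq_zero_of_card_lt
    ((star U * B).submatrix (Subtype.val : {i // 0 < hM.eigenvalues i} → n) id)
    (by rwa [Fintype.card_subtype])
  have hvanish : ∀ i, 0 < hM.eigenvalues i → (star U *ᵥ (B *ᵥ w)) i = 0 := fun i hi ↦ by
    rw [mulVec_mulVec]; exact congr_fun hw ⟨i, hi⟩
  have hquad : star w ⬝ᵥ ((Bᴴ * M * B) *ᵥ w) = star (B *ᵥ w) ⬝ᵥ (M *ᵥ (B *ᵥ w)) := by
    rw [← mulVec_mulVec, ← mulVec_mulVec, dotProduct_mulVec, star_mulVec]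
  have hpos := hB.re_dotProduct_pos hw0
  rw [hquad, hM.re_dotProduct_mulVec_eq_sum] at hpos
  refine hpos.not_ge (Finset.sum_nonpos fun i _ ↦ ?_)
  rcases le_or_gt (hM.eigenvalues i) 0 with hi | hi
  · exact mul_nonpos_of_nonpos_of_nonneg hi (sq_nonneg _)
  · simp [U, hvanish i hi]

theorem IsHermitian.card_le_card_pos_eigenvalues_of_posDef_submatrix {M : Matrix n n 𝕜}
    (hM : M.IsHermitian) {f : m → n} (hf : (M.submatrix f f).PosDef) :
    Fintype.card m ≤ (Finset.univ.filter fun i => 0 < hM.eigenvalues i).card :=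
  hM.card_le_card_pos_eigenvalues_of_posDef (submatrix_eq_conjTranspose_mul_mul M f ▸ hf)

end

end Matrix

theorem det_nonpos_of_principal_submatrix_general (n : ℕ)
    (M : Matrix (Fin n) (Fin n) ℝ) (hM : M.IsHermitian)
    (hpos : (Finset.univ.filter fun i => 0 < hM.eigenvalues i).card = 1)
    (f : Fin 2 → Fin n)
    (A : Matrix (Fin 2) (Fin 2) ℝ) (hA : A = M.submatrix f f)
    (v : Fin 2 → ℝ) (hv : 0 < v ⬝ᵥ A.mulVec v) :
    A.det ≤ 0 := by
  by_contra! hdet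
  subst hA
  have hv' : 0 < RCLike.re (star v ⬝ᵥ (M.submatrix f f *ᵥ v)) := by simpa using hv
  have hposDef : (M.submatrix f f).PosDef :=
    posDef_of_re_det_pos_of_re_dotProduct_pos (hM.submatrix f) hdet hv'
  have hcard := hM.card_le_card_pos_eigenvalues_of_posDef_submatrix hposDef
  simp [hpos] at hcard

/-- If `M` is a real symmetric matrix with exactly one positive eigenvalue and `A` is a
`2 × 2` principal submatrix with `vᵀ A v > 0` for some `v`, then `det A ≤ 0`. -/
theorem det_nonpos_of_principal_submatrix (n : ℕ)
    (M : Matrix (Fin n) (Fin n) ℝ) (hM : M.IsHermitian)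
    (hpos : (Finset.univ.filter fun i => 0 < hM.eigenvalues i).card = 1)
    (f : Fin 2 → Fin n) (hf : Function.Injective f)
    (A : Matrix (Fin 2) (Fin 2) ℝ) (hA : A = M.submatrix f f)
    (v : Fin 2 → ℝ) (hv : 0 < v ⬝ᵥ A.mulVec v) :
    A.det ≤ 0 :=
  det_nonpos_of_principal_submatrix_general n M hM hpos f A hA v hv
end

section
/- If f = Σ_{α} (c_α/α!) x^α is a Lorentzian polynomial of degree d in n variables, then for every α with |α| = d and all indices i, j ∈ [n], the coefficients satisfy c_α² ≥ c_{α+e_i−e_j} · c_{α−e_i+e_j}. -/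
/-!
Writing `c_m = m! · [x^m] f`, each partial derivative `∂_i` just shifts these normalised
coefficients, `c_m(∂_i f) = c_{m + e_i}(f)`. Hence for `|β| = d - 2` the Hessian of `∂^β f` is the
constant matrix `H_{kl} = c_{β + e_k + e_l}`. A symmetric matrix with at most one positive
eigenvalue takes a nonpositive value on some nonzero vector of every plane; on the plane spanned
by `e_i, e_j` this forces `H_ii H_jj ≤ H_ij²` once `H_ii ≥ 0`. Taking
`β = α - e_i - e_j` gives `c_{α+e_i-e_j} c_{α-e_i+e_j} ≤ c_α²`.
-/

variable {σ : Type*} [Fintype σ] [DecidableEq σ]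

/-- The iterated partial derivative `∂^β` of a multivariate polynomial. -/
noncomputable def mderiv (β : σ →₀ ℕ) (f : MvPolynomial σ ℝ) : MvPolynomial σ ℝ :=
  (Finset.univ : Finset σ).toList.foldr
    (fun i p => (fun q => MvPolynomial.pderiv i q)^[β i] p) f

/-- The support of `f` is M-convex. -/
def MConvexSupport (f : MvPolynomial σ ℝ) : Prop :=
  ∀ a ∈ f.support, ∀ b ∈ f.support, ∀ i : σ, b i < a i →
    ∃ j : σ, a j < b j ∧ (a - Finsupp.single i 1 + Finsupp.single j 1) ∈ f.support

/-- The Hessian matrix of `f` evaluated at the point `x`. -/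
noncomputable def hessAt (f : MvPolynomial σ ℝ) (x : σ → ℝ) : Matrix σ σ ℝ :=
  Matrix.of fun i j => MvPolynomial.eval x (MvPolynomial.pderiv i (MvPolynomial.pderiv j f))

/-- A real symmetric matrix has at most one positive eigenvalue
(counted with multiplicity). -/
def AtMostOnePosEig (H : Matrix σ σ ℝ) : Prop :=
  ∃ hH : H.IsHermitian, (Finset.univ.filter fun i => 0 < hH.eigenvalues i).card ≤ 1

/-- `f` is a Lorentzian polynomial of degree `d`: it is homogeneous of degree `d` with
nonnegative coefficients and M-convex support, and every `(d−2)`-fold partial derivative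
`∂^β f` either vanishes or has Hessian with at most one positive eigenvalue at every
point of the positive orthant. -/
def IsLorentzian (d : ℕ) (f : MvPolynomial σ ℝ) : Prop :=
  f.IsHomogeneous d ∧ (∀ m, 0 ≤ f.coeff m) ∧ MConvexSupport f ∧
  ∀ β : σ →₀ ℕ, (β.sum fun _ k => k) = d - 2 →
    mderiv β f = 0 ∨
      ∀ x : σ → ℝ, (∀ i, 0 < x i) → AtMostOnePosEig (hessAt (mderiv β f) x)

open MvPolynomial Finsupp
open scoped Matrix

/-- The normalised coefficient `c_m` in `f = Σ_m (c_m / m!) x^m`. -/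
noncomputable def factorialCoeff {ι : Type*} (f : MvPolynomial ι ℝ) (m : ι →₀ ℕ) : ℝ :=
  (m.prod fun _ k => (k.factorial : ℝ)) * f.coeff m

section FactorialCoeff

variable {ι : Type*}

lemma prod_factorial_add_single (m : ι →₀ ℕ) (i : ι) :
    ((m + single i 1).prod fun _ k => (k.factorial : ℝ))
      = ((m i : ℝ) + 1) * m.prod fun _ k => (k.factorial : ℝ) := by
  have hg : ∀ _ : ι, ((0 : ℕ).factorial : ℝ) = 1 := fun _ => by simp
  rw [← mul_prod_erase' (m + single i 1) i _ hg, ← mul_prod_erase' m i _ hg, erase_add,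
    erase_single, add_zero, ← mul_assoc]
  simp [Nat.factorial_succ]

lemma prod_factorial_pos (m : ι →₀ ℕ) : 0 < m.prod fun _ k => (k.factorial : ℝ) :=
  Finset.prod_pos fun _ _ => by positivity

lemma factorialCoeff_nonneg {f : MvPolynomial ι ℝ} (hf : ∀ m, 0 ≤ f.coeff m) (m : ι →₀ ℕ) :
    0 ≤ factorialCoeff f m :=
  mul_nonneg (prod_factorial_pos m).le (hf m)

@[simp]
lemma factorialCoeff_zero_right (f : MvPolynomial ι ℝ) : factorialCoeff f 0 = f.coeff 0 := by
  simp [factorialCoeff]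

lemma factorialCoeff_pderiv (i : ι) (f : MvPolynomial ι ℝ) (m : ι →₀ ℕ) :
    factorialCoeff (pderiv i f) m = factorialCoeff f (m + single i 1) := by
  rw [factorialCoeff, factorialCoeff, coeff_pderiv, prod_factorial_add_single]
  ring

lemma factorialCoeff_iterate_pderiv (i : ι) (k : ℕ) (f : MvPolynomial ι ℝ) (m : ι →₀ ℕ) :
    factorialCoeff ((pderiv i)^[k] f) m = factorialCoeff f (m + single i k) := by
  induction k generalizing m with
  | zero => simp
  | succ k ih =>
    rw [Function.iterate_succ_apply', factorialCoeff_pderiv, ih, add_assoc, ← single_add,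
      add_comm 1 k]

lemma factorialCoeff_foldr_iterate_pderiv (β : ι →₀ ℕ) (l : List ι) (f : MvPolynomial ι ℝ)
    (m : ι →₀ ℕ) :
    factorialCoeff (l.foldr (fun i p => (fun q => pderiv i q)^[β i] p) f) m
      = factorialCoeff f (m + (l.map fun i => single i (β i)).sum) := by
  induction l generalizing m with
  | nil => simp
  | cons a l ih =>
    rw [List.foldr_cons, factorialCoeff_iterate_pderiv, ih, List.map_cons, List.sum_cons,
      add_assoc]

lemma factorialCoeff_mderiv [Fintype ι] (β : ι →₀ ℕ) (f : MvPolynomial ι ℝ) (m : ι →₀ ℕ) :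
    factorialCoeff (mderiv β f) m = factorialCoeff f (m + β) := by
  rw [mderiv, factorialCoeff_foldr_iterate_pderiv, Finset.sum_map_toList, univ_sum_single]

lemma MvPolynomial.IsHomogeneous.iterate_pderiv {f : MvPolynomial ι ℝ} {d : ℕ}
    (hf : f.IsHomogeneous d) (i : ι) (k : ℕ) : ((pderiv i)^[k] f).IsHomogeneous (d - k) := by
  induction k with
  | zero => simpa using hf
  | succ k ih => rw [Function.iterate_succ_apply', ← Nat.sub_sub]; exact ih.pderiv

lemma MvPolynomial.IsHomogeneous.foldr_iterate_pderiv {f : MvPolynomial ι ℝ} {d : ℕ}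
    (hf : f.IsHomogeneous d) (β : ι →₀ ℕ) (l : List ι) :
    (l.foldr (fun i p => (fun q => pderiv i q)^[β i] p) f).IsHomogeneous
      (d - (l.map β).sum) := by
  induction l with
  | nil => simpa using hf
  | cons a l ih =>
    rw [List.foldr_cons, List.map_cons, List.sum_cons, add_comm, ← Nat.sub_sub]
    exact ih.iterate_pderiv a (β a)

lemma MvPolynomial.IsHomogeneous.mderiv [Fintype ι] {f : MvPolynomial ι ℝ} {d : ℕ}
    (hf : f.IsHomogeneous d) (β : ι →₀ ℕ) : (mderiv β f).IsHomogeneous (d - β.degree) := by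
  rw [_root_.mderiv, degree_eq_sum, ← Finset.sum_map_toList]
  exact hf.foldr_iterate_pderiv β _

end FactorialCoeff

lemma hessAt_mderiv {ι : Type*} [Fintype ι] {f : MvPolynomial ι ℝ} {d : ℕ}
    (hf : f.IsHomogeneous d) {β : ι →₀ ℕ} (hβ : β.degree = d - 2) (x : ι → ℝ) (k l : ι) :
    hessAt (mderiv β f) x k l = factorialCoeff f (β + single k 1 + single l 1) := by
  have hconst : (pderiv k (pderiv l (mderiv β f))).IsHomogeneous 0 := by
    convert (hf.mderiv β).pderiv.pderiv using 1
    omega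
  rw [← totalDegree_zero_iff_isHomogeneous, totalDegree_eq_zero_iff_eq_C] at hconst
  rw [hessAt, Matrix.of_apply, hconst, eval_C, ← factorialCoeff_zero_right,
    factorialCoeff_pderiv, factorialCoeff_pderiv, factorialCoeff_mderiv, zero_add, add_comm]
  abel_nf

section Spectral

variable {ι : Type*} [Fintype ι] [DecidableEq ι]

lemma Matrix.IsHermitian.dotProduct_mulVec_eq_sum_eigenvalues {H : Matrix ι ι ℝ}
    (hH : H.IsHermitian) (v : ι → ℝ) :
    v ⬝ᵥ (H *ᵥ v) = ∑ k, hH.eigenvalues k *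
      ((star (hH.eigenvectorUnitary : Matrix ι ι ℝ) *ᵥ v) k) ^ 2 := by
  set U : Matrix ι ι ℝ := (hH.eigenvectorUnitary : Matrix ι ι ℝ)
  have hvU : v ᵥ* U = star U *ᵥ v := by
    rw [Matrix.star_eq_conjTranspose, Matrix.mulVec_conjTranspose]
    simp
  conv_lhs => rw [hH.spectral_theorem]
  simp only [Unitary.conjStarAlgAut_apply]
  rw [← Matrix.mulVec_mulVec, ← Matrix.mulVec_mulVec, Matrix.dotProduct_mulVec, hvU,
    dotProduct]
  refine Finset.sum_congr rfl fun k _ => ?_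
  rw [Matrix.mulVec_diagonal]
  simp only [Function.comp_apply, RCLike.ofReal_real_eq_id, id]
  ring

lemma exists_ne_zero_mul_add_mul_eq_zero (p q : ℝ) :
    ∃ x y : ℝ, (x ≠ 0 ∨ y ≠ 0) ∧ x * p + y * q = 0 := by
  rcases eq_or_ne p 0 with rfl | hp
  · exact ⟨1, 0, by simp, by simp⟩
  · exact ⟨q, -p, Or.inr (neg_ne_zero.mpr hp), by ring⟩

lemma AtMostOnePosEig.exists_dotProduct_mulVec_nonpos {H : Matrix ι ι ℝ}
    (h : AtMostOnePosEig H) (u w : ι → ℝ) :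
    ∃ x y : ℝ, (x ≠ 0 ∨ y ≠ 0) ∧ (x • u + y • w) ⬝ᵥ (H *ᵥ (x • u + y • w)) ≤ 0 := by
  obtain ⟨hH, hcard⟩ := h
  set U := star (hH.eigenvectorUnitary : Matrix ι ι ℝ)
  -- kill the coordinate along the (at most one) eigenvector with positive eigenvalue
  obtain ⟨x, y, hxy, hker⟩ : ∃ x y : ℝ, (x ≠ 0 ∨ y ≠ 0) ∧
      ∀ k, 0 < hH.eigenvalues k → x * (U *ᵥ u) k + y * (U *ᵥ w) k = 0 := by
    rcases (Finset.univ.filter fun k => 0 < hH.eigenvalues k).eq_empty_or_nonempty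
      with hP | ⟨k₀, hk₀⟩
    · refine ⟨1, 0, by simp, fun k hk => absurd hk ?_⟩
      simpa using Finset.filter_eq_empty_iff.mp hP (Finset.mem_univ k)
    · obtain ⟨x, y, hxy, h⟩ := exists_ne_zero_mul_add_mul_eq_zero ((U *ᵥ u) k₀) ((U *ᵥ w) k₀)
      refine ⟨x, y, hxy, fun k hk => ?_⟩
      rwa [Finset.card_le_one.mp hcard k (by simpa using hk) k₀ hk₀]
  refine ⟨x, y, hxy, ?_⟩
  rw [hH.dotProduct_mulVec_eq_sum_eigenvalues]
  refine Finset.sum_nonpos fun k _ => ?_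
  rcases le_or_gt (hH.eigenvalues k) 0 with hk | hk
  · exact mul_nonpos_of_nonpos_of_nonneg hk (sq_nonneg _)
  · simp [U, Matrix.mulVec_add, Matrix.mulVec_smul, hker k hk]

lemma mul_le_sq_of_quadratic_nonpos {a b c x y : ℝ} (ha : 0 ≤ a) (hxy : x ≠ 0 ∨ y ≠ 0)
    (hq : a * x ^ 2 + 2 * b * x * y + c * y ^ 2 ≤ 0) : a * c ≤ b ^ 2 := by
  by_contra! h
  have ha_pos : 0 < a := ha.lt_of_ne (by rintro rfl; nlinarith [sq_nonneg b])
  have hc : 0 < c := by nlinarith [sq_nonneg b]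
  rcases hxy with hx | hy
  · nlinarith [sq_nonneg (c * y + b * x), mul_pos (sub_pos.mpr h) (sq_pos_of_ne_zero hx)]
  · nlinarith [sq_nonneg (a * x + b * y), mul_pos (sub_pos.mpr h) (sq_pos_of_ne_zero hy)]

lemma dotProduct_mulVec_smul_single_add_smul_single (H : Matrix ι ι ℝ) (i j : ι) (x y : ℝ) :
    (x • Pi.single i 1 + y • Pi.single j 1) ⬝ᵥ (H *ᵥ (x • Pi.single i 1 + y • Pi.single j 1))
      = H i i * x ^ 2 + (H i j + H j i) * x * y + H j j * y ^ 2 := by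
  simp [Matrix.mulVec_add, Matrix.mulVec_smul, add_dotProduct, dotProduct_add]
  ring

lemma AtMostOnePosEig.mul_le_sq {H : Matrix ι ι ℝ} (h : AtMostOnePosEig H) {i j : ι}
    (hii : 0 ≤ H i i) : H i i * H j j ≤ H i j ^ 2 := by
  obtain ⟨x, y, hxy, hq⟩ := h.exists_dotProduct_mulVec_nonpos (Pi.single i 1) (Pi.single j 1)
  have hji : H j i = H i j := by simpa using h.1.apply i j
  rw [dotProduct_mulVec_smul_single_add_smul_single, hji] at hq
  exact mul_le_sq_of_quadratic_nonpos hii hxy (by simpa [two_mul, add_mul] using hq)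

end Spectral

theorem IsLorentzian.factorialCoeff_mul_le {d : ℕ} {f : MvPolynomial σ ℝ} (hf : IsLorentzian d f)
    {β : σ →₀ ℕ} (hβ : β.degree = d - 2) (i j : σ) :
    factorialCoeff f (β + single i 1 + single i 1) * factorialCoeff f (β + single j 1 + single j 1)
      ≤ factorialCoeff f (β + single i 1 + single j 1) ^ 2 := by
  obtain ⟨hhom, hnonneg, -, hlor⟩ := hf
  have hH := hessAt_mderiv hhom hβ (fun _ => 1)
  simp only [← hH]
  rcases hlor β hβ with hzero | hpos
  · simp [hzero, hessAt]
  · exact (hpos _ fun _ => one_pos).mul_le_sq (by rw [hH]; exact factorialCoeff_nonneg hnonneg _)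

lemma Finsupp.exists_eq_add_single_add_single {ι : Type*} {α : ι →₀ ℕ} {i j : ι} (hij : i ≠ j)
    (hi : α i ≠ 0) (hj : α j ≠ 0) : ∃ β, α = β + single i 1 + single j 1 := by
  obtain ⟨γ, rfl⟩ := exists_add_of_le (single_le_iff.mpr (Nat.one_le_iff_ne_zero.mpr hj))
  rw [add_apply, single_eq_of_ne hij, zero_add] at hi
  obtain ⟨β, rfl⟩ := exists_add_of_le (single_le_iff.mpr (Nat.one_le_iff_ne_zero.mpr hi))
  exact ⟨β, by abel⟩

/-- If `f = Σ_α (c_α / α!) x^α` is Lorentzian of degree `d`, then for every `α` with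
`|α| = d` and all `i, j`, `c_α² ≥ c_{α+e_i−e_j} · c_{α−e_i+e_j}` (where `c_γ = 0` if
`γ` has a negative entry). -/
theorem lorentzian_coeff_log_concave (d : ℕ) (f : MvPolynomial σ ℝ)
    (hf : IsLorentzian d f) (c : (σ →₀ ℕ) → ℝ)
    (hc : ∀ m : σ →₀ ℕ, f.coeff m = c m / (m.prod fun _ k => (k.factorial : ℝ)))
    (α : σ →₀ ℕ) (hα : (α.sum fun _ k => k) = d) (i j : σ) :
    (if α j = 0 then 0 else c (α + Finsupp.single i 1 - Finsupp.single j 1)) *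
      (if α i = 0 then 0 else c (α - Finsupp.single i 1 + Finsupp.single j 1))
      ≤ (c α) ^ 2 := by
  obtain rfl : c = factorialCoeff f := funext fun m => by
    rw [factorialCoeff, hc, mul_div_cancel₀ _ (prod_factorial_pos m).ne']
  rcases eq_or_ne i j with rfl | hij
  · split_ifs with hi
    · simpa using sq_nonneg _
    · rw [add_tsub_cancel_right,
        tsub_add_cancel_of_le (single_le_iff.mpr (Nat.one_le_iff_ne_zero.mpr hi)), sq]
  by_cases hj : α j = 0
  · simp only [hj, if_true, zero_mul]; exact sq_nonneg _
  by_cases hi : α i = 0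
  · simp only [hi, if_true, mul_zero]; exact sq_nonneg _
  obtain ⟨β, rfl⟩ := exists_eq_add_single_add_single hij hi hj
  have hβ : β.degree = d - 2 := by
    change (β + single i 1 + single j 1).degree = d at hα
    simp only [map_add, degree_single] at hα
    omega
  have hii : β + single i 1 + single j 1 + single i 1 - single j 1
      = β + single i 1 + single i 1 := by rw [add_right_comm _ (single j 1), add_tsub_cancel_right]
  have hjj : β + single i 1 + single j 1 - single i 1 + single j 1
      = β + single j 1 + single j 1 := by rw [add_right_comm β, add_tsub_cancel_right]
  rw [if_neg hj, if_neg hi, hii, hjj]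
  exact hf.factorialCoeff_mul_le hβ i j
end
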